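/- arXiv:1109.5306 — 2 statements merged into one kernel-verified Lean document; each statement's English description precedes it below -/
import Mathlib

section
/- There exists a disjoint decomposition ℝ^d = ⋃_{n=0}^∞ A_n into countably many pairwise disjoint sets A_n such that: (1) for every n ∈ ℕ and every isometry φ of ℝ^d, the symmetric difference φ(A_n) Δ A_n has cardinality strictly less than 2^ω (the cardinality of the continuum); and (2) for every n ∈ ℕ and every perfect set P ⊆ ℝ^d, the intersection A_n ∩ P has cardinality exactly 2^ω. -/
/-!
Enumerate the isometries `(g_j)` and the pairs (perfect set, label) in order type `𝔠`, each pair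
`𝔠` times. Let `H_j` be the group generated by `g_i`, `i ≤ j`, so `|H_j| < 𝔠`. By transfinite
recursion pick `x_j` in the `j`-th perfect set outside the `H_j`-orbits of all earlier `x_i`
(possible since perfect sets have size `𝔠`). The orbits `H_j x_j` are then pairwise disjoint;
give the points of `H_j x_j` the `j`-th label and all remaining points label `0`. An isometry `g_γ`
preserves every orbit `H_j x_j` with `j ≥ γ`, so it can only change labels on the fewer than `𝔠`
points of the earlier orbits.
-/

open Cardinal Function Set Pointwise TopologicalSpace
open scoped symmDiff

universe u

theorem Cardinal.mk_le_continuum_of_countablySeparated (α : Type u) [MeasurableSpace α]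
    [MeasurableSpace.CountablySeparated α] : #α ≤ 𝔠 := by
  obtain ⟨f, -, hf⟩ := MeasurableSpace.measurable_injection_nat_bool_of_countablySeparated α
  simpa using lift_mk_le_lift_mk_of_injective hf

theorem ContinuousMap.mk_le_continuum {X Y : Type u} [TopologicalSpace X]
    [SeparableSpace X] [TopologicalSpace Y] [T2Space Y] (hY : #Y ≤ 𝔠) :
    #C(X, Y) ≤ 𝔠 := by
  obtain ⟨s, hs, hsd⟩ := exists_countable_dense X
  have hrestrict : Injective fun f : C(X, Y) => fun x : s => f x := fun f g hfg =>
    ContinuousMap.ext <| congrFun <| f.continuous.ext_on hsd g.continuous fun x hx =>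
      congrFun hfg ⟨x, hx⟩
  calc #C(X, Y) ≤ #(s → Y) := mk_le_of_injective hrestrict
    _ = #Y ^ #s := by simp
    _ ≤ 𝔠 ^ ℵ₀ := (power_le_power_right hY).trans
        (power_le_power_left continuum_ne_zero hs.le_aleph0)
    _ = 𝔠 := continuum_power_aleph0

theorem IsometryEquiv.mk_le_continuum {X : Type u} [MetricSpace X]
    [SeparableSpace X] (hX : #X ≤ 𝔠) : #(X ≃ᵢ X) ≤ 𝔠 :=
  (mk_le_of_injective (f := fun φ : X ≃ᵢ X => (φ : C(X, X))) fun _ _ h =>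
    IsometryEquiv.ext fun x => DFunLike.congr_fun h x).trans (ContinuousMap.mk_le_continuum hX)

theorem mk_setOf_isClosed_le_continuum (X : Type u) [TopologicalSpace X]
    [SecondCountableTopology X] : #{s : Set X | IsClosed s} ≤ 𝔠 := by
  let B := countableBasis X
  have hinj : Injective fun s : {s : Set X | IsClosed s} =>
      {b : B | (b : Set X) ⊆ (s : Set X)ᶜ} := by
    have hcompl (s : {s : Set X | IsClosed s}) :
        (s : Set X)ᶜ = ⋃ b ∈ {b : B | (b : Set X) ⊆ (s : Set X)ᶜ}, (b : Set X) := by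
      ext y
      simp only [mem_iUnion, exists_prop]
      constructor
      · intro hy
        obtain ⟨b, hb, hyb, hbs⟩ :=
          (isBasis_countableBasis X).isOpen_iff.1 s.2.isOpen_compl y hy
        exact ⟨⟨b, hb⟩, hbs, hyb⟩
      · rintro ⟨b, hbs, hyb⟩
        exact hbs hyb
    intro s t hst
    apply Subtype.ext
    apply compl_injective
    rw [hcompl s, hcompl t]
    simp only at hst
    rw [hst]
  calc #{s : Set X | IsClosed s} ≤ #(Set B) := mk_le_of_injective hinj
    _ = 2 ^ #B := mk_set
    _ ≤ 2 ^ ℵ₀ := power_le_power_left two_ne_zero (countable_countableBasis X).le_aleph0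
    _ = 𝔠 := two_power_aleph0

theorem Perfect.continuum_le_mk {X : Type u} [MetricSpace X] [CompleteSpace X] {P : Set X}
    (hP : Perfect P) (hne : P.Nonempty) : 𝔠 ≤ #P := by
  obtain ⟨f, hfP, -, hf⟩ := hP.exists_nat_bool_injection hne
  simpa using lift_mk_le_lift_mk_of_injective (f := codRestrict f P fun b => hfP ⟨b, rfl⟩)
    (injective_codRestrict _ |>.2 hf)

theorem Subgroup.mk_closure_le {G : Type u} [Group G] (s : Set G) :
    #(Subgroup.closure s) ≤ max #s ℵ₀ := by
  rcases s.eq_empty_or_nonempty with rfl | hs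
  · simp [Subgroup.closure_empty]
  have : Nonempty s := hs.to_subtype
  calc #(Subgroup.closure s) = #(range (FreeGroup.lift ((↑) : s → G))) := by
        rw [← MonoidHom.coe_range, FreeGroup.range_lift_eq_closure, Subtype.range_coe]; rfl
    _ ≤ #(FreeGroup s) := mk_range_le
    _ = max #s ℵ₀ := mk_freeGroup _

theorem Cardinal.mk_Iic_ord_toType_lt {κ : Cardinal.{u}} (hκ : ℵ₀ ≤ κ) (j : κ.ord.ToType) :
    #(Iic j) < κ := by
  simpa using mk_Iic_lt j (by simp) (by simpa using hκ)

theorem exists_monotone_subgroups_covering {G ι : Type u} [Group G] [Preorder ι] {κ : Cardinal.{u}}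
    (hκ : ℵ₀ < κ) (hG : #G ≤ #ι) (hι : ∀ j : ι, #(Iic j) < κ) :
    ∃ H : ι → Subgroup G, Monotone H ∧ (∀ j, #(H j) < κ) ∧ ∀ g, ∃ j, g ∈ H j := by
  obtain ⟨e⟩ := hG
  refine ⟨fun j => Subgroup.closure (e ⁻¹' Iic j), fun i j hij => ?_, fun j => ?_,
    fun g => ⟨e g, Subgroup.subset_closure le_rfl⟩⟩
  · exact Subgroup.closure_mono (preimage_mono (Iic_subset_Iic.2 hij))
  · exact (Subgroup.mk_closure_le _).trans_lt
      (max_lt ((mk_preimage_of_injective _ _ e.injective).trans_lt (hι j)) hκ)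

theorem exists_large_fibers {ι T : Type u} [Nonempty T] (hι : ℵ₀ ≤ #ι) (hT : #T ≤ #ι) :
    ∃ t : ι → T, ∀ τ, #ι ≤ #(t ⁻¹' {τ}) := by
  obtain ⟨e⟩ : Nonempty (ι ≃ ι × T) := by
    refine Cardinal.eq.1 (Eq.symm ?_)
    rw [mk_prod, lift_id, lift_id, Cardinal.mul_eq_left hι hT (mk_ne_zero T)]
  refine ⟨fun j => (e j).2, fun τ =>
    mk_le_of_injective (f := fun j => ⟨e.symm (j, τ), by simp⟩) ?_⟩
  intro i j h
  simpa using congrArg (fun x => (e x.1).1) h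

theorem smul_preimage_singleton_symmDiff_subset {G X L : Type*} [Group G] [MulAction G X]
    {f : X → L} {g : G} {B : Set X} (hf : ∀ y ∉ B, g • y ∉ B → f (g • y) = f y) (l : L) :
    (g • f ⁻¹' {l}) ∆ (f ⁻¹' {l}) ⊆ g • B ∪ B := by
  intro y hy
  by_contra hyB
  rw [mem_union, not_or, mem_smul_set_iff_inv_smul_mem] at hyB
  have hfy : f y = f (g⁻¹ • y) := by simpa using hf _ hyB.1 (by simpa using hyB.2)
  rw [mem_symmDiff, mem_smul_set_iff_inv_smul_mem] at hy
  simp [hfy] at hy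

theorem Subgroup.mk_smul_range_le {G X α : Type u} [Group G] [MulAction G X] (H : Subgroup G)
    (x : α → X) : #↥((H : Set G) • range x) ≤ #H * #α := by
  rw [← image2_smul]
  exact mk_image2_le.trans (mul_le_mul' le_rfl mk_range_le)

namespace OrbitAvoiding

variable {G X ι : Type u} [Group G] [MulAction G X] [LinearOrder ι] [WellFoundedLT ι] [Nonempty X]
  (H : ι → Subgroup G) (P : ι → Set X)

noncomputable def seq : ι → X :=
  WellFoundedLT.fix fun j x =>
    Classical.epsilon fun y => y ∈ P j \ (H j : Set G) • range fun i : Iio j => x i i.2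

theorem seq_eq (j : ι) :
    seq H P j = Classical.epsilon fun y =>
      y ∈ P j \ (H j : Set G) • (range fun i : Iio j => seq H P i) := by
  rw [seq, WellFoundedLT.fix_eq]

def piece (j : ι) : Set X := (H j : Set G) • {seq H P j}

variable {L : Type*} [Inhabited L] (c : ι → L)

open Classical in
noncomputable def label (y : X) : L :=
  if h : ∃ j, y ∈ piece H P j then c h.choose else default

variable {H P c}

theorem seq_mem_diff (hP : ∀ j, #(H j) * #(Iio j) < #(P j)) (j : ι) :
    seq H P j ∈ P j \ (H j : Set G) • (range fun i : Iio j => seq H P i) := by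
  rw [seq_eq]
  refine Classical.epsilon_spec (sdiff_nonempty.2 fun hsub => ?_)
  exact ((Subgroup.mk_smul_range_le _ _).trans_lt (hP j)).not_ge (mk_le_mk_of_subset hsub)

theorem smul_seq_ne_smul_seq (hP : ∀ j, #(H j) * #(Iio j) < #(P j)) {i j : ι} (hij : i < j)
    {a b : G} (ha : a ∈ H j) (hb : b ∈ H j) : a • seq H P i ≠ b • seq H P j := by
  intro h
  have hseq : seq H P j = (b⁻¹ * a) • seq H P i := by rw [mul_smul, h, inv_smul_smul]
  exact (seq_mem_diff hP j).2 (hseq ▸ smul_mem_smul (mul_mem (inv_mem hb) ha) ⟨⟨i, hij⟩, rfl⟩)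

theorem seq_injective (hP : ∀ j, #(H j) * #(Iio j) < #(P j)) : Injective (seq H P) := by
  intro i j h
  by_contra hne
  rcases lt_or_gt_of_ne hne with hij | hji
  · exact smul_seq_ne_smul_seq hP hij (one_mem _) (one_mem _) (by simpa using h)
  · exact smul_seq_ne_smul_seq hP hji (one_mem _) (one_mem _) (by simpa using h.symm)

theorem mem_piece {j : ι} {y : X} : y ∈ piece H P j ↔ ∃ a ∈ H j, a • seq H P j = y := by
  simp [piece]

theorem seq_mem_piece (j : ι) : seq H P j ∈ piece H P j :=
  mem_piece.2 ⟨1, one_mem _, one_smul _ _⟩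

theorem smul_mem_piece_iff {g : G} {j : ι} (hg : g ∈ H j) {y : X} :
    g • y ∈ piece H P j ↔ y ∈ piece H P j := by
  simp only [mem_piece]
  constructor
  · rintro ⟨a, ha, hay⟩
    exact ⟨g⁻¹ * a, mul_mem (inv_mem hg) ha, by rw [mul_smul, hay, inv_smul_smul]⟩
  · rintro ⟨a, ha, rfl⟩
    exact ⟨g * a, mul_mem hg ha, mul_smul _ _ _⟩

theorem pairwise_disjoint_piece (hH : Monotone H) (hP : ∀ j, #(H j) * #(Iio j) < #(P j)) :
    Pairwise (Disjoint on piece H P) := by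
  refine (pairwise_disjoint_on _).2 fun i j hij => disjoint_left.2 fun y hi hj => ?_
  obtain ⟨a, ha, rfl⟩ := mem_piece.1 hi
  obtain ⟨b, hb, hab⟩ := mem_piece.1 hj
  exact smul_seq_ne_smul_seq hP hij (hH hij.le ha) hb hab.symm

theorem iUnion_lt_piece_subset (hH : Monotone H) (γ : ι) :
    ⋃ j < γ, piece H P j ⊆ (H γ : Set G) • range fun i : Iio γ => seq H P i := by
  simp only [iUnion_subset_iff, piece]
  intro j hj
  exact smul_subset_smul (fun a ha => hH hj.le ha) (singleton_subset_iff.2 ⟨⟨j, hj⟩, rfl⟩)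

theorem label_of_mem_piece (hH : Monotone H) (hP : ∀ j, #(H j) * #(Iio j) < #(P j)) {j : ι}
    {y : X} (hy : y ∈ piece H P j) : label H P c y = c j := by
  have h : ∃ j, y ∈ piece H P j := ⟨j, hy⟩
  rw [label, dif_pos h]
  congr
  by_contra hne
  exact disjoint_left.1 (pairwise_disjoint_piece hH hP hne) h.choose_spec hy

theorem label_of_forall_not_mem_piece {y : X} (hy : ∀ j, y ∉ piece H P j) :
    label H P c y = default :=
  dif_neg fun ⟨j, hj⟩ => hy j hj

theorem label_smul (hH : Monotone H) (hP : ∀ j, #(H j) * #(Iio j) < #(P j)) {g : G} {γ : ι}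
    (hg : g ∈ H γ) {y : X} (hy : y ∉ ⋃ j < γ, piece H P j)
    (hgy : g • y ∉ ⋃ j < γ, piece H P j) : label H P c (g • y) = label H P c y := by
  simp only [mem_iUnion, not_exists] at hy hgy
  have hpiece (j : ι) : g • y ∈ piece H P j ↔ y ∈ piece H P j := by
    rcases lt_or_ge j γ with hj | hj
    · exact iff_of_false (hgy j hj) (hy j hj)
    · exact smul_mem_piece_iff (hH hj hg)
  by_cases h : ∃ j, y ∈ piece H P j
  · obtain ⟨j, hj⟩ := h
    rw [label_of_mem_piece hH hP hj, label_of_mem_piece hH hP ((hpiece j).2 hj)]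
  · push Not at h
    rw [label_of_forall_not_mem_piece h,
      label_of_forall_not_mem_piece fun j => (hpiece j).not.2 (h j)]

theorem seq_mem_label_preimage_inter (hH : Monotone H) (hP : ∀ j, #(H j) * #(Iio j) < #(P j))
    (j : ι) : seq H P j ∈ label H P c ⁻¹' {c j} ∩ P j :=
  ⟨label_of_mem_piece hH hP (seq_mem_piece j), (seq_mem_diff hP j).1⟩

theorem mk_smul_preimage_label_symmDiff_le (hH : Monotone H)
    (hP : ∀ j, #(H j) * #(Iio j) < #(P j)) {g : G} {γ : ι} (hg : g ∈ H γ) (l : L) :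
    #↥((g • label H P c ⁻¹' {l}) ∆ (label H P c ⁻¹' {l})) ≤
      #(H γ) * #(Iio γ) + #(H γ) * #(Iio γ) := by
  set B := ⋃ j < γ, piece H P j
  have hB : #B ≤ #(H γ) * #(Iio γ) :=
    (mk_le_mk_of_subset (iUnion_lt_piece_subset hH γ)).trans (Subgroup.mk_smul_range_le _ _)
  calc #↥((g • label H P c ⁻¹' {l}) ∆ (label H P c ⁻¹' {l})) ≤ #↥(g • B ∪ B) :=
        mk_le_mk_of_subset <| smul_preimage_singleton_symmDiff_subset
          (fun _ hy hgy => label_smul hH hP hg hy hgy) l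
    _ ≤ #↥(g • B) + #B := mk_union_le _ _
    _ ≤ #(H γ) * #(Iio γ) + #(H γ) * #(Iio γ) := by rw [mk_smul_set]; gcongr

end OrbitAvoiding

theorem exists_labelling_almost_invariant_meeting_large_sets {G X L : Type u} [Group G]
    [MulAction G X] [Inhabited L] {κ : Cardinal.{u}} (hκ : ℵ₀ < κ) (hG : #G ≤ κ) (hL : #L ≤ κ)
    (S : Set (Set X)) (hS : #S ≤ κ) (hP : ∀ P ∈ S, κ ≤ #P) :
    ∃ f : X → L, (∀ (g : G) (l : L), #↥((g • f ⁻¹' {l}) ∆ (f ⁻¹' {l})) < κ) ∧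
      ∀ l, ∀ P ∈ S, κ ≤ #↥(f ⁻¹' {l} ∩ P) := by
  rcases S.eq_empty_or_nonempty with rfl | ⟨P₀, hP₀⟩
  · refine ⟨fun _ => default, fun g l => ?_, fun l P hP => hP.elim⟩
    by_cases hl : default = l <;> simp [hl, aleph0_pos.trans hκ]
  have : Nonempty S := ⟨⟨P₀, hP₀⟩⟩
  have : Nonempty X :=
    (mk_ne_zero_iff.1 ((aleph0_pos.trans hκ).trans_le (hP P₀ hP₀)).ne').map Subtype.val
  have hι : #κ.ord.ToType = κ := mk_ord_toType κ
  have hIic := mk_Iic_ord_toType_lt hκ.le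
  have hIio (j : κ.ord.ToType) : #(Iio j) < κ :=
    (mk_le_mk_of_subset Iio_subset_Iic_self).trans_lt (hIic j)
  obtain ⟨H, hH, hHκ, hGH⟩ := exists_monotone_subgroups_covering hκ (hι ▸ hG) hIic
  obtain ⟨t, ht⟩ := exists_large_fibers (T := S × L) (hι ▸ hκ.le) <| by
    rw [hι, mk_prod, lift_id, lift_id]
    exact (mul_le_mul' hS hL).trans (mul_eq_self hκ.le).le
  have hHP (j : κ.ord.ToType) : #(H j) * #(Iio j) < #((t j).1 : Set X) :=
    (mul_lt_of_lt hκ.le (hHκ j) (hIio j)).trans_le (hP _ (t j).1.2)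
  refine ⟨OrbitAvoiding.label H (fun j => (t j).1) (fun j => (t j).2), fun g l => ?_,
    fun l Q hQ => ?_⟩
  · obtain ⟨γ, hγ⟩ := hGH g
    have hγκ := mul_lt_of_lt hκ.le (hHκ γ) (hIio γ)
    exact (OrbitAvoiding.mk_smul_preimage_label_symmDiff_le hH hHP hγ l).trans_lt
      (add_lt_of_lt hκ.le hγκ hγκ)
  · calc κ = #κ.ord.ToType := hι.symm
      _ ≤ #(t ⁻¹' {(⟨Q, hQ⟩, l)}) := ht _
      _ = #(OrbitAvoiding.seq H _ '' t ⁻¹' {(⟨Q, hQ⟩, l)}) :=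
        (mk_image_eq (OrbitAvoiding.seq_injective hHP)).symm
      _ ≤ _ := mk_le_mk_of_subset ?_
    rintro _ ⟨j, hj, rfl⟩
    rw [mem_preimage, mem_singleton_iff] at hj
    simpa only [hj] using
      OrbitAvoiding.seq_mem_label_preimage_inter hH hHP (c := fun j => (t j).2) j

instance IsometryEquiv.applyMulAction (X : Type*) [PseudoEMetricSpace X] :
    MulAction (X ≃ᵢ X) X where
  smul φ x := φ x
  one_smul _ := rfl
  mul_smul _ _ _ := rfl

/-- There is a partition `ℝ^d = ⋃ₙ Aₙ` into countably many
pairwise disjoint sets such that each `Aₙ` moves by a set of cardinality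
`< 𝔠` under every isometry, and each `Aₙ` meets every (nonempty) perfect set
in a set of cardinality exactly `𝔠`. -/
theorem exists_partition_almost_isometry_invariant_meeting_perfect_sets
    (d : ℕ) :
    ∃ A : ℕ → Set (EuclideanSpace ℝ (Fin d)),
      Pairwise (Function.onFun Disjoint A) ∧
      (⋃ n, A n) = Set.univ ∧
      (∀ (n : ℕ) (φ : EuclideanSpace ℝ (Fin d) ≃ᵢ EuclideanSpace ℝ (Fin d)),
        Cardinal.mk ↥((φ '' A n) ∆ (A n)) < Cardinal.continuum) ∧
      (∀ (n : ℕ) (P : Set (EuclideanSpace ℝ (Fin d))),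
        Perfect P → P.Nonempty → Cardinal.mk ↥(A n ∩ P) = Cardinal.continuum) := by
  have hE := mk_le_continuum_of_countablySeparated (EuclideanSpace ℝ (Fin d))
  obtain ⟨f, hf_invariant, hf_meets⟩ := exists_labelling_almost_invariant_meeting_large_sets
    (L := ℕ) aleph0_lt_continuum (IsometryEquiv.mk_le_continuum hE)
    (by simpa using aleph0_le_continuum) {P | Perfect P ∧ P.Nonempty}
    ((mk_le_mk_of_subset fun P hP => hP.1.closed).trans
      (mk_setOf_isClosed_le_continuum (EuclideanSpace ℝ (Fin d))))
    fun P hP => hP.1.continuum_le_mk hP.2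
  refine ⟨fun n => f ⁻¹' {n}, fun m n hmn => Disjoint.preimage _ (disjoint_singleton.2 hmn),
    iUnion_eq_univ_iff.2 fun y => ⟨f y, rfl⟩, fun n φ => hf_invariant φ n,
    fun n P hP hne => ((mk_set_le _).trans hE).antisymm (hf_meets n P ⟨hP, hne⟩)⟩
end

section
/- Let μ be a σ-finite translation invariant measure defined on a translation invariant σ-algebra 𝒜 of subsets of ℝ^d containing all Borel subsets of ℝ^d, and suppose that the restriction of μ to the Borel sets is not σ-finite. Then for every Borel set B ⊆ ℝ^d we have either μ(B) = 0 or μ(B) = ∞. -/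
open MeasureTheory Set
open scoped ENNReal

/-- The σ-algebra of Borel subsets of `ℝ^d`. -/
noncomputable def borelSets (d : ℕ) : MeasurableSpace (EuclideanSpace ℝ (Fin d)) :=
  borel (EuclideanSpace ℝ (Fin d))

/-! Tonelli's theorem for two translation-invariant s-finite measures `λ`, `ν` on an abelian
group, with `λ` invariant under negation, gives `λ s * ν t = ν s * λ t` for all measurable `s`,
`t`. The restriction of `μ` to the Borel sets is still s-finite (only σ-finiteness is lost), so
this applies to it and to a Haar measure `λ`. If `ν s ∉ {0, ∞}`, taking `t = univ` shows
`λ s ≠ 0`, hence `ν` is finite on every set of finite Haar measure and so is σ-finite. -/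

namespace MeasureTheory

instance Measure.sFinite_trim {α : Type*} {m m0 : MeasurableSpace α} (hm : m ≤ m0)
    (μ : @Measure α m0) [SFinite μ] : SFinite (μ.trim hm) := by
  rw [trim_eq_map]
  infer_instance

theorem Measure.isAddLeftInvariant_trim {G : Type*} {m0 : MeasurableSpace G} [MeasurableSpace G]
    [AddCommGroup G] [MeasurableAdd G] (hm : ‹MeasurableSpace G› ≤ m0) (μ : @Measure G m0)
    (hμ : ∀ (A : Set G) (t : G), MeasurableSet[m0] A → μ ((fun x => x + t) '' A) = μ A) :
    (μ.trim hm).IsAddLeftInvariant := by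
  refine ⟨fun t => Measure.ext fun s hs => ?_⟩
  have hpre : (fun x => t + x) ⁻¹' s = (fun x => x + -t) '' s := by
    rw [image_add_right, neg_neg]
    simp_rw [add_comm t]
  rw [Measure.map_apply (measurable_const_add t) hs,
    trim_measurableSet_eq hm (hs.preimage (measurable_const_add t)), trim_measurableSet_eq hm hs,
    hpre, hμ s (-t) (hm s hs)]

section AddCommGroup

variable {G : Type*} [MeasurableSpace G] [AddCommGroup G] [MeasurableAdd₂ G] [MeasurableNeg G]

theorem measure_mul_measure_eq_of_isNegInvariant (μ ν : Measure G) [SFinite μ] [SFinite ν]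
    [μ.IsAddLeftInvariant] [ν.IsAddLeftInvariant] [μ.IsNegInvariant]
    {s t : Set G} (hs : MeasurableSet s) (ht : MeasurableSet t) :
    μ s * ν t = ν s * μ t := by
  have h := measure_add_lintegral_eq μ ν hs (t.indicator 1) (measurable_one.indicator ht)
  simp_rw [measure_preimage_add_right, lintegral_indicator_one ht] at h
  rw [h, lintegral_const_mul (f := fun x => t.indicator 1 (-x))
      _ ((measurable_one.indicator ht).comp measurable_neg),
    lintegral_neg_eq_self (t.indicator 1), lintegral_indicator_one ht]

theorem measure_eq_zero_or_top_of_not_sigmaFinite (μ ν : Measure G) [SigmaFinite μ] [NeZero μ]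
    [μ.IsAddLeftInvariant] [μ.IsNegInvariant] [SFinite ν] [ν.IsAddLeftInvariant]
    (hν : ¬ SigmaFinite ν) {s : Set G} (hs : MeasurableSet s) : ν s = 0 ∨ ν s = ∞ := by
  by_contra! h
  obtain ⟨hs0, hstop⟩ := h
  have hμs : μ s ≠ 0 := by
    intro hμs
    have h := measure_mul_measure_eq_of_isNegInvariant μ ν hs MeasurableSet.univ
    rw [hμs, zero_mul, eq_comm] at h
    exact mul_ne_zero hs0 (Measure.measure_univ_ne_zero.mpr (NeZero.ne μ)) h
  refine hν ⟨⟨⟨spanningSets μ, fun _ => trivial, fun n => ?_, iUnion_spanningSets μ⟩⟩⟩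
  refine ENNReal.lt_top_of_mul_ne_top_right ?_ hμs
  rw [measure_mul_measure_eq_of_isNegInvariant μ ν hs (measurableSet_spanningSets μ n)]
  exact ENNReal.mul_ne_top hstop (measure_spanningSets_lt_top μ n).ne

end AddCommGroup

theorem measure_eq_zero_or_top_of_not_sigmaFinite_trim {E : Type*} [NormedAddCommGroup E]
    [NormedSpace ℝ E] [FiniteDimensional ℝ E] {m : MeasurableSpace E} (μ : @Measure E m)
    [SFinite μ] (hm : borel E ≤ m)
    (hμ : ∀ (A : Set E) (t : E), MeasurableSet[m] A → μ ((fun x => x + t) '' A) = μ A)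
    (hμσ : ¬ SigmaFinite (μ.trim hm)) {s : Set E} (hs : MeasurableSet[borel E] s) :
    μ s = 0 ∨ μ s = ∞ := by
  -- `borelize E` fails here: `m` is also a local instance.
  let : MeasurableSpace E := borel E
  have : BorelSpace E := ⟨rfl⟩
  have := Measure.isAddLeftInvariant_trim hm μ hμ
  rw [← trim_measurableSet_eq hm hs]
  exact measure_eq_zero_or_top_of_not_sigmaFinite Measure.addHaar _ hμσ hs

end MeasureTheory

theorem measure_borel_eq_zero_or_top_of_not_sigmaFinite_on_borel_general
    (d : ℕ) (m : MeasurableSpace (EuclideanSpace ℝ (Fin d)))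
    (μ : @Measure (EuclideanSpace ℝ (Fin d)) m)
    (hBorel : ∀ B : Set (EuclideanSpace ℝ (Fin d)),
      MeasurableSet[borelSets d] B → MeasurableSet[m] B)
    (hinv : ∀ (A : Set (EuclideanSpace ℝ (Fin d))) (t : EuclideanSpace ℝ (Fin d)),
      MeasurableSet[m] A → μ ((fun x => x + t) '' A) = μ A)
    (hsf : ∃ s : ℕ → Set (EuclideanSpace ℝ (Fin d)),
      (⋃ n, s n) = Set.univ ∧ ∀ n, μ (s n) < ⊤)
    (hnsf : ¬ (∃ s : ℕ → Set (EuclideanSpace ℝ (Fin d)),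
      (⋃ n, s n) = Set.univ ∧
      ∀ n, MeasurableSet[borelSets d] (s n) ∧ μ (s n) < ⊤)) :
    ∀ B : Set (EuclideanSpace ℝ (Fin d)), MeasurableSet[borelSets d] B →
      μ B = 0 ∨ μ B = ⊤ := by
  obtain ⟨s, hs_cover, hs_fin⟩ := hsf
  have : SigmaFinite μ := ⟨⟨⟨s, fun _ => trivial, hs_fin, hs_cover⟩⟩⟩
  have hle : borel (EuclideanSpace ℝ (Fin d)) ≤ m := hBorel
  intro B hB
  refine measure_eq_zero_or_top_of_not_sigmaFinite_trim μ hle hinv ?_ hB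
  intro _
  exact hnsf ⟨spanningSets (μ.trim hle), iUnion_spanningSets _, fun n =>
    ⟨(measurableSet_spanningSets (μ.trim hle) n :),
      (le_trim hle).trans_lt (measure_spanningSets_lt_top _ n)⟩⟩

/-- If a σ-finite translation invariant measure on a
translation invariant σ-algebra containing the Borel subsets of ℝ^d is not
σ-finite when restricted to the Borel sets, then every Borel set has measure
`0` or `∞`. -/
theorem measure_borel_eq_zero_or_top_of_not_sigmaFinite_on_borel
    (d : ℕ) (m : MeasurableSpace (EuclideanSpace ℝ (Fin d)))
    (μ : @Measure (EuclideanSpace ℝ (Fin d)) m)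
    (hBorel : ∀ B : Set (EuclideanSpace ℝ (Fin d)),
      MeasurableSet[borelSets d] B → MeasurableSet[m] B)
    (hAinv : ∀ (A : Set (EuclideanSpace ℝ (Fin d))) (t : EuclideanSpace ℝ (Fin d)),
      MeasurableSet[m] A → MeasurableSet[m] ((fun x => x + t) '' A))
    (hinv : ∀ (A : Set (EuclideanSpace ℝ (Fin d))) (t : EuclideanSpace ℝ (Fin d)),
      MeasurableSet[m] A → μ ((fun x => x + t) '' A) = μ A)
    (hsf : ∃ s : ℕ → Set (EuclideanSpace ℝ (Fin d)),
      (⋃ n, s n) = Set.univ ∧ ∀ n, μ (s n) < ⊤)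
    (hnsf : ¬ (∃ s : ℕ → Set (EuclideanSpace ℝ (Fin d)),
      (⋃ n, s n) = Set.univ ∧
      ∀ n, MeasurableSet[borelSets d] (s n) ∧ μ (s n) < ⊤)) :
    ∀ B : Set (EuclideanSpace ℝ (Fin d)), MeasurableSet[borelSets d] B →
      μ B = 0 ∨ μ B = ⊤ :=
  measure_borel_eq_zero_or_top_of_not_sigmaFinite_on_borel_general d m μ hBorel hinv hsf hnsf
end
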